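/- (Marcinkiewicz interpolation, discrete form) Let T be a finite set and let S be a linear map from functions f : T → ℝ^d to functions Sf : T → ℝ^d. Suppose there are constants c₁, c₂ such that for all f and all t > 0: #{x : |Sf(x)| > t} ≤ c₁·(Σ_x |f(x)|)/t and #{x : |Sf(x)| > t} ≤ c₂·(Σ_x |f(x)|²)/t². Then for every q with 1 < q < 2 there is a constant β(q, c₁, c₂) independent of T and f such that Σ_x |Sf(x)|^q ≤ β·Σ_x |f(x)|^q. -/

import Mathlib

/-!
Since `a ^ q = q ∫₀^∞ t^(q-1) 1[t < a] dt`, we have `∑ ‖Sf‖^q = q ∫₀^∞ t^(q-1) #{‖Sf‖ > t} dt`.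
At height `t` split `f` into its part where `‖f‖ > t` and the rest; by additivity of `S`,
`#{‖Sf‖ > t}` is at most the weak (1,1) bound of the first part plus the weak (2,2) bound of the
second, both taken at `t/2`. Integrating in `t`, a point with `‖f x‖ = a` contributes
`2c₁ a ∫₀^a t^(q-2) dt + 4c₂ a² ∫_a^∞ t^(q-3) dt`, and both integrals converge because `1 < q < 2`
and scale like `a^q`.
-/

open Finset MeasureTheory Set

section PowerIntegrals

variable {p a : ℝ}

lemma integrableOn_Ioi_indicator_Iio_rpow (hp : -1 < p) (a : ℝ) :
    IntegrableOn ((Iio a).indicator (· ^ p)) (Ioi 0) := by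
  rw [integrableOn_indicator_iff measurableSet_Iio, Iio_inter_Ioi]
  rcases le_or_gt a 0 with ha | ha
  · simp [Ioo_eq_empty_of_le ha]
  · exact (intervalIntegral.integrableOn_Ioo_rpow_iff ha).2 hp

lemma integral_Ioi_indicator_Iio_rpow (hp : -1 < p) (ha : 0 ≤ a) :
    ∫ t in Ioi 0, (Iio a).indicator (· ^ p) t = a ^ (p + 1) / (p + 1) := by
  rw [setIntegral_indicator measurableSet_Iio, Ioi_inter_Iio, ← integral_Ioc_eq_integral_Ioo,
    ← intervalIntegral.integral_of_le ha, integral_rpow (Or.inl hp),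
    Real.zero_rpow (by linarith), sub_zero]

lemma integrableOn_Ioi_indicator_Ici_rpow (hp : p < -1) (ha : 0 < a) :
    IntegrableOn ((Ici a).indicator (· ^ p)) (Ioi 0) := by
  rw [integrableOn_indicator_iff measurableSet_Ici, inter_eq_left.2 (Ici_subset_Ioi.2 ha),
    integrableOn_Ici_iff_integrableOn_Ioi]
  exact integrableOn_Ioi_rpow_of_lt hp ha

lemma integral_Ioi_indicator_Ici_rpow (hp : p < -1) (ha : 0 < a) :
    ∫ t in Ioi 0, (Ici a).indicator (· ^ p) t = -a ^ (p + 1) / (p + 1) := by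
  rw [setIntegral_indicator measurableSet_Ici, inter_eq_right.2 (Ici_subset_Ioi.2 ha),
    integral_Ici_eq_integral_Ioi, integral_Ioi_rpow_of_lt hp ha]

end PowerIntegrals

/-- `t^(q-1)` times the contribution of a point with `‖f x‖ = a` to the weak-type bounds at
height `t/2`: of type (1,1) if `t < a`, of type (2,2) otherwise. -/
noncomputable def weakTypeMajorant (c₁ c₂ q a t : ℝ) : ℝ :=
  2 * c₁ * a * (Iio a).indicator (· ^ (q - 2)) t
    + 4 * c₂ * a ^ 2 * (Ici a).indicator (· ^ (q - 3)) t

section WeakTypeMajorant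

variable {c₁ c₂ q a : ℝ}

lemma weakTypeMajorant_zero (c₁ c₂ q : ℝ) : weakTypeMajorant c₁ c₂ q 0 = 0 := by
  ext t
  simp [weakTypeMajorant]

lemma weakTypeMajorant_of_lt {t : ℝ} (ht : t < a) :
    weakTypeMajorant c₁ c₂ q a t = 2 * c₁ * a * t ^ (q - 2) := by
  simp [weakTypeMajorant, ht, not_le.2 ht]

lemma weakTypeMajorant_of_le {t : ℝ} (ht : a ≤ t) :
    weakTypeMajorant c₁ c₂ q a t = 4 * c₂ * a ^ 2 * t ^ (q - 3) := by
  simp [weakTypeMajorant, ht, not_lt.2 ht]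

lemma integrableOn_weakTypeMajorant (hq1 : 1 < q) (hq2 : q < 2) (ha : 0 ≤ a) :
    IntegrableOn (weakTypeMajorant c₁ c₂ q a) (Ioi 0) := by
  rcases ha.eq_or_lt with rfl | ha
  · rw [weakTypeMajorant_zero]
    exact integrableOn_zero
  · exact ((integrableOn_Ioi_indicator_Iio_rpow (by linarith) a).const_mul _).add
      ((integrableOn_Ioi_indicator_Ici_rpow (by linarith) ha).const_mul _)

lemma integral_weakTypeMajorant (hq1 : 1 < q) (hq2 : q < 2) (ha : 0 ≤ a) :
    ∫ t in Ioi 0, weakTypeMajorant c₁ c₂ q a t = (2 * c₁ / (q - 1) + 4 * c₂ / (2 - q)) * a ^ q := by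
  rcases ha.eq_or_lt with rfl | ha
  · simp [weakTypeMajorant_zero, Real.zero_rpow (by linarith : q ≠ 0)]
  have hIio := integrableOn_Ioi_indicator_Iio_rpow (by linarith : -1 < q - 2) a
  have hIci := integrableOn_Ioi_indicator_Ici_rpow (by linarith : q - 3 < -1) ha
  unfold weakTypeMajorant
  rw [integral_add (hIio.const_mul _) (hIci.const_mul _), integral_const_mul,
    integral_const_mul, integral_Ioi_indicator_Iio_rpow (by linarith) ha.le,
    integral_Ioi_indicator_Ici_rpow (by linarith) ha, show q - 2 + 1 = q - 1 by ring,
    show q - 3 + 1 = q - 2 by ring, neg_div, ← div_neg, neg_sub]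
  have hpow₁ : a * a ^ (q - 1) = a ^ q := by
    rw [← Real.rpow_one_add' ha.le (by linarith), add_sub_cancel]
  have hpow₂ : a ^ 2 * a ^ (q - 2) = a ^ q := by
    rw [← Real.rpow_natCast, ← Real.rpow_add ha, Nat.cast_ofNat, add_sub_cancel]
  calc _ = 2 * c₁ / (q - 1) * (a * a ^ (q - 1)) + 4 * c₂ / (2 - q) * (a ^ 2 * a ^ (q - 2)) := by
        ring
    _ = _ := by rw [hpow₁, hpow₂, add_mul]

end WeakTypeMajorant

section LayerCake

variable {ι : Type*} [Fintype ι] {a : ι → ℝ} {q : ℝ}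

lemma sum_indicator_Iio_eq_card_mul (a : ι → ℝ) (g : ℝ → ℝ) (t : ℝ) :
    ∑ i, (Iio (a i)).indicator g t = Nat.card {i | t < a i} * g t := by
  classical
  simp only [indicator_apply, Set.mem_Iio, Finset.sum_ite, sum_const_zero, add_zero, sum_const,
    nsmul_eq_mul, Nat.card_eq_fintype_card, Fintype.card_subtype]
  rfl

lemma sum_rpow_eq_integral_rpow_mul_card (ha : 0 ≤ a) (hq : 0 < q) :
    ∑ i, a i ^ q = q * ∫ t in Ioi 0, t ^ (q - 1) * Nat.card {i | t < a i} := by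
  have hp : -1 < q - 1 := by linarith
  have hpoint : ∀ i, a i ^ q = q * ∫ t in Ioi 0, (Iio (a i)).indicator (· ^ (q - 1)) t := by
    intro i
    rw [integral_Ioi_indicator_Iio_rpow hp (ha i), sub_add_cancel, mul_div_cancel₀ _ hq.ne']
  simp_rw [hpoint, ← mul_sum, ← integral_finsetSum _ fun i _ ↦
    integrableOn_Ioi_indicator_Iio_rpow hp (a i), sum_indicator_Iio_eq_card_mul, mul_comm]

lemma sum_rpow_le_of_rpow_mul_card_le (ha : 0 ≤ a) (hq : 0 < q) {G : ℝ → ℝ}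
    (hG : IntegrableOn G (Ioi 0))
    (hbound : ∀ t, 0 < t → t ^ (q - 1) * Nat.card {i | t < a i} ≤ G t) :
    ∑ i, a i ^ q ≤ q * ∫ t in Ioi 0, G t := by
  rw [sum_rpow_eq_integral_rpow_mul_card ha hq]
  refine mul_le_mul_of_nonneg_left (integral_mono_of_nonneg ?_ hG ?_) hq.le
  · filter_upwards [ae_restrict_mem measurableSet_Ioi] with t ht
    exact mul_nonneg (Real.rpow_nonneg ht.le _) (Nat.cast_nonneg _)
  · filter_upwards [ae_restrict_mem measurableSet_Ioi] with t ht
    exact hbound t ht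

end LayerCake

section WeakType

variable {T V W : Type*} [Fintype T] [SeminormedAddCommGroup V] [SeminormedAddCommGroup W]

lemma card_lt_norm_add_le (g h : T → W) (s u : ℝ) :
    Nat.card {x | s + u < ‖g x + h x‖} ≤ Nat.card {x | s < ‖g x‖} + Nat.card {x | u < ‖h x‖} := by
  simp only [Nat.card_coe_set_eq]
  refine (Set.ncard_le_ncard (fun x hx ↦ ?_) (toFinite _)).trans (Set.ncard_union_le _ _)
  by_contra hx'
  simp only [mem_union, mem_ofPred_eq, not_or, not_lt] at hx hx'
  linarith [norm_add_le (g x) (h x)]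

def HasDiscreteWeakType (S : (T → V) →+ (T → W)) (p : ℕ) (c : ℝ) : Prop :=
  ∀ (f : T → V) (t : ℝ), 0 < t →
    (Nat.card {x | t < ‖S f x‖} : ℝ) ≤ c * (∑ x, ‖f x‖ ^ p) / t ^ p

variable {S : (T → V) →+ (T → W)} {c₁ c₂ : ℝ}

lemma HasDiscreteWeakType.card_lt_norm_le (h₁ : HasDiscreteWeakType S 1 c₁)
    (h₂ : HasDiscreteWeakType S 2 c₂) (f : T → V) (s : Set T) {t : ℝ} (ht : 0 < t) :
    (Nat.card {x | t < ‖S f x‖} : ℝ) ≤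
      ∑ x, (2 * c₁ / t * ‖s.indicator f x‖ + 4 * c₂ / t ^ 2 * ‖sᶜ.indicator f x‖ ^ 2) :=
  calc (Nat.card {x | t < ‖S f x‖} : ℝ)
      ≤ Nat.card {x | t / 2 < ‖S (s.indicator f) x‖}
        + Nat.card {x | t / 2 < ‖S (sᶜ.indicator f) x‖} := by
        conv_lhs => rw [← add_halves t, ← indicator_self_add_compl s f, map_add]
        exact_mod_cast card_lt_norm_add_le _ _ _ _
    _ ≤ c₁ * (∑ x, ‖s.indicator f x‖ ^ 1) / (t / 2) ^ 1
        + c₂ * (∑ x, ‖sᶜ.indicator f x‖ ^ 2) / (t / 2) ^ 2 :=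
        add_le_add (h₁ _ _ (half_pos ht)) (h₂ _ _ (half_pos ht))
    _ = _ := by
        rw [sum_add_distrib, ← mul_sum, ← mul_sum]
        simp only [pow_one]
        field_simp
        ring

lemma HasDiscreteWeakType.rpow_mul_card_le (h₁ : HasDiscreteWeakType S 1 c₁)
    (h₂ : HasDiscreteWeakType S 2 c₂) (f : T → V) (q : ℝ) {t : ℝ} (ht : 0 < t) :
    t ^ (q - 1) * Nat.card {x | t < ‖S f x‖} ≤ ∑ x, weakTypeMajorant c₁ c₂ q ‖f x‖ t := by
  set large := {x | t < ‖f x‖}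
  have hterm : ∀ x, t ^ (q - 1) *
      (2 * c₁ / t * ‖large.indicator f x‖ + 4 * c₂ / t ^ 2 * ‖largeᶜ.indicator f x‖ ^ 2) =
      weakTypeMajorant c₁ c₂ q ‖f x‖ t := by
    have hpow₁ : t ^ (q - 1) = t ^ (q - 2) * t := by
      rw [← Real.rpow_add_one ht.ne']; ring_nf
    have hpow₂ : t ^ (q - 1) = t ^ (q - 3) * t ^ 2 := by
      rw [← Real.rpow_natCast, ← Real.rpow_add ht]; ring_nf
    intro x
    by_cases hx : x ∈ large
    · rw [indicator_of_mem hx, indicator_of_notMem (not_not_intro hx), norm_zero,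
        weakTypeMajorant_of_lt hx, hpow₁]
      field_simp
      ring
    · rw [indicator_of_notMem hx, indicator_of_mem (mem_compl hx), norm_zero,
        weakTypeMajorant_of_le (not_lt.1 hx), hpow₂]
      field_simp
      ring
  calc t ^ (q - 1) * Nat.card {x | t < ‖S f x‖}
      ≤ t ^ (q - 1) * ∑ x, (2 * c₁ / t * ‖large.indicator f x‖
          + 4 * c₂ / t ^ 2 * ‖largeᶜ.indicator f x‖ ^ 2) :=
        mul_le_mul_of_nonneg_left (h₁.card_lt_norm_le h₂ f large ht)
          (Real.rpow_nonneg ht.le _)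
    _ = _ := by rw [mul_sum]; exact sum_congr rfl fun x _ ↦ hterm x

end WeakType

/-- discrete Marcinkiewicz interpolation: weak-type `(1,1)` and
`(2,2)` bounds for a linear operator `S` on functions on a finite set imply the
strong type `(q,q)` bound for every `1 < q < 2`, with a constant depending only
on `q, c₁, c₂` (in particular independent of the finite set and of `f`). -/
theorem stmt_10 (c₁ c₂ : ℝ) (q : ℝ) (hq1 : 1 < q) (hq2 : q < 2) :
    ∃ β : ℝ, ∀ (T : Type) (_ : Fintype T)
      (V : Type) (_ : NormedAddCommGroup V) (_ : NormedSpace ℝ V)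
      (S : (T → V) →ₗ[ℝ] (T → V)),
      (∀ (f : T → V) (t : ℝ), 0 < t →
        (Nat.card {x : T | t < ‖S f x‖} : ℝ) ≤ c₁ * (∑ x : T, ‖f x‖) / t) →
      (∀ (f : T → V) (t : ℝ), 0 < t →
        (Nat.card {x : T | t < ‖S f x‖} : ℝ) ≤ c₂ * (∑ x : T, ‖f x‖ ^ 2) / t ^ 2) →
      ∀ f : T → V, ∑ x : T, ‖S f x‖ ^ q ≤ β * ∑ x : T, ‖f x‖ ^ q := by
  refine ⟨q * (2 * c₁ / (q - 1) + 4 * c₂ / (2 - q)), fun T _ V _ _ S h₁ h₂ f ↦ ?_⟩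
  have hmajorant : ∀ x, IntegrableOn (weakTypeMajorant c₁ c₂ q ‖f x‖) (Ioi 0) :=
    fun x ↦ integrableOn_weakTypeMajorant hq1 hq2 (norm_nonneg _)
  calc ∑ x, ‖S f x‖ ^ q
      ≤ q * ∫ t in Ioi 0, ∑ x, weakTypeMajorant c₁ c₂ q ‖f x‖ t :=
        sum_rpow_le_of_rpow_mul_card_le (fun x ↦ norm_nonneg _) (by linarith)
          (integrable_finsetSum _ fun x _ ↦ hmajorant x)
          fun t ht ↦ HasDiscreteWeakType.rpow_mul_card_le (S := S.toAddMonoidHom)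
            (fun f t ht ↦ by simpa using h₁ f t ht) h₂ f q ht
    _ = q * (2 * c₁ / (q - 1) + 4 * c₂ / (2 - q)) * ∑ x, ‖f x‖ ^ q := by
        simp_rw [integral_finsetSum _ fun x _ ↦ hmajorant x,
          integral_weakTypeMajorant hq1 hq2 (norm_nonneg _), ← mul_sum, mul_assoc]
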